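/- Let A be the incidence algebra of a finite poset presented by a bound quiver with full commutativity relations and M a finite-dimensional right A-module. For each interval I with Mon(V_I, M) ≠ ∅, let W_I ⊆ Hom_A(V_I, M) be the span of all monomorphisms V_I → M, with basis {f_I^{(1)},…,f_I^{(n_I)}} consisting of monomorphisms. Then the combined morphism (f_I^{(i)})_{I,i} : ⊕_I V_I^{n_I} → M is a right interval approximation of M. -/

import Mathlib

set_option linter.unusedSectionVars false

open scoped Classical

/-- A persistence module over the poset `P`: a functor `P → Vect_k`.
(This models pointwise finite modules over the incidence algebra `A = kQ/ρ` of the poset.) -/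
structure PersMod (k P : Type) [Field k] [PartialOrder P] where
  V : P → Type
  [acg : ∀ a, AddCommGroup (V a)]
  [mod : ∀ a, Module k (V a)]
  map : ∀ {a b : P}, a ≤ b → (V a →ₗ[k] V b)
  map_id : ∀ a : P, map (le_refl a) = LinearMap.id
  map_comp : ∀ {a b c : P} (h₁ : a ≤ b) (h₂ : b ≤ c),
    (map h₂).comp (map h₁) = map (h₁.trans h₂)

attribute [instance] PersMod.acg PersMod.mod

variable {k P : Type} [Field k] [PartialOrder P]

/-- Morphisms of persistence modules, as a `k`-submodule of the product of Hom-spaces. -/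
def PersHomSub (M N : PersMod k P) :
    Submodule k (∀ a : P, M.V a →ₗ[k] N.V a) where
  carrier := {f | ∀ ⦃a b : P⦄ (h : a ≤ b), (N.map h).comp (f a) = (f b).comp (M.map h)}
  add_mem' := by
    intro f g hf hg a b h
    simp only [Pi.add_apply, LinearMap.comp_add, LinearMap.add_comp, hf h, hg h]
  zero_mem' := by intro a b h; simp
  smul_mem' := by
    intro c f hf a b h
    simp only [Pi.smul_apply, LinearMap.comp_smul, LinearMap.smul_comp, hf h]

/-- The space of morphisms `M → N` of persistence modules. -/
def PersHom (M N : PersMod k P) : Type := ↥(PersHomSub M N)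

noncomputable instance (M N : PersMod k P) : AddCommGroup (PersHom M N) :=
  inferInstanceAs (AddCommGroup ↥(PersHomSub M N))
noncomputable instance (M N : PersMod k P) : Module k (PersHom M N) :=
  inferInstanceAs (Module k ↥(PersHomSub M N))

/-- Composition of morphisms of persistence modules. -/
def PersHom.comp {M N O : PersMod k P} (g : PersHom N O) (f : PersHom M N) :
    PersHom M O :=
  ⟨fun a => (g.1 a).comp (f.1 a), by
    intro a b h
    rw [← LinearMap.comp_assoc, g.2 h, LinearMap.comp_assoc, f.2 h, LinearMap.comp_assoc]⟩

def IsMonoP {M N : PersMod k P} (f : PersHom M N) : Prop :=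
  ∀ a : P, Function.Injective (f.1 a)

def IsEpiP {M N : PersMod k P} (f : PersHom M N) : Prop :=
  ∀ a : P, Function.Surjective (f.1 a)

def IsIsoP {M N : PersMod k P} (f : PersHom M N) : Prop :=
  ∀ a : P, Function.Bijective (f.1 a)

/-- Convexity of a subset of the poset. -/
def IsConvexSet (I : Set P) : Prop :=
  ∀ ⦃a b c : P⦄, a ∈ I → c ∈ I → a ≤ b → b ≤ c → b ∈ I

/-- Zigzag-connectivity of a subset of the poset. -/
def IsConnectedSet (I : Set P) : Prop :=
  I.Nonempty ∧ ∀ a ∈ I, ∀ b ∈ I,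
    Relation.ReflTransGen (fun x y => x ∈ I ∧ y ∈ I ∧ (x ≤ y ∨ y ≤ x)) a b

/-- An interval of the poset: a connected convex subset. -/
def IsIntervalSet (I : Set P) : Prop := IsConvexSet I ∧ IsConnectedSet I

/-- The underlying linear map of the interval module. -/
noncomputable def intervalMap (I : Set P) (a b : P) :
    ↥(if a ∈ I then (⊤ : Submodule k k) else ⊥) →ₗ[k]
      ↥(if b ∈ I then (⊤ : Submodule k k) else ⊥) where
  toFun v := ⟨if a ∈ I ∧ b ∈ I then (v : k) else 0, by
    by_cases hb : b ∈ I
    · simp [hb]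
    · have hab : ¬(a ∈ I ∧ b ∈ I) := fun h' => hb h'.2
      rw [if_neg hb, if_neg hab]
      exact Submodule.zero_mem _⟩
  map_add' v w := by
    apply Subtype.ext
    by_cases h' : a ∈ I ∧ b ∈ I <;> simp [h']
  map_smul' c v := by
    apply Subtype.ext
    by_cases h' : a ∈ I ∧ b ∈ I <;> simp [h']

@[simp] lemma intervalMap_coe (I : Set P) (a b : P)
    (v : ↥(if a ∈ I then (⊤ : Submodule k k) else ⊥)) :
    ((intervalMap I a b v : ↥(if b ∈ I then (⊤ : Submodule k k) else ⊥)) : k)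
      = if a ∈ I ∧ b ∈ I then (v : k) else 0 := rfl

lemma intervalMem_zero {I : Set P} {a : P} (ha : a ∉ I)
    (v : ↥(if a ∈ I then (⊤ : Submodule k k) else ⊥)) : (v : k) = 0 := by
  obtain ⟨x, hx⟩ := v
  rw [if_neg ha] at hx
  exact (Submodule.mem_bot k).1 hx

/-- The interval module `V_I` associated to a convex subset `I`. -/
noncomputable def intervalMod (I : Set P) (hI : IsConvexSet I) : PersMod k P where
  V a := ↥(if a ∈ I then (⊤ : Submodule k k) else ⊥)
  map {a b} _ := intervalMap I a b
  map_id a := by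
    ext v
    rw [intervalMap_coe]
    by_cases ha : a ∈ I
    · simp [ha]
    · have hv := intervalMem_zero ha v
      simp only [ha, false_and, if_false, LinearMap.id_coe, id_eq, hv]
  map_comp {a b c} h₁ h₂ := by
    ext v
    rw [LinearMap.comp_apply, intervalMap_coe, intervalMap_coe, intervalMap_coe]
    by_cases ha : a ∈ I <;> by_cases hb : b ∈ I <;> by_cases hc : c ∈ I <;>
      first
        | (exact absurd (hI ha hc h₁ h₂) hb)
        | simp [ha, hb, hc]

/-- Finite direct sums of persistence modules. -/
noncomputable def dSum {ι : Type} (M : ι → PersMod k P) : PersMod k P where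
  V a := ∀ i, (M i).V a
  map {a b} h := LinearMap.pi fun i => ((M i).map h).comp (LinearMap.proj i)
  map_id a := by
    refine LinearMap.ext fun v => ?_
    funext i
    simp [LinearMap.pi_apply, (M i).map_id]
  map_comp {a b c} h₁ h₂ := by
    refine LinearMap.ext fun v => ?_
    funext i
    simpa [LinearMap.pi_apply] using LinearMap.congr_fun ((M i).map_comp h₁ h₂) (v i)

/-- A persistence module is interval decomposable if it is isomorphic to a finite
direct sum of interval modules. -/
def IntervalDecomposable (W : PersMod k P) : Prop :=
  ∃ (n : ℕ) (J : Fin n → Set P) (hJ : ∀ i, IsIntervalSet (J i))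
    (e : PersHom W (dSum fun i => intervalMod (J i) (hJ i).1)), IsIsoP e

/-- The combined morphism `⊕ᵢ Mᵢ → N` of a finite family of morphisms `Mᵢ → N`. -/
noncomputable def combineHom {ι : Type} [Fintype ι] {Mf : ι → PersMod k P}
    {N : PersMod k P} (f : ∀ i, PersHom (Mf i) N) : PersHom (dSum Mf) N :=
  ⟨fun a => ∑ i, ((f i).1 a).comp (LinearMap.proj i), by
    intro a b h
    refine LinearMap.ext fun v => ?_
    simp only [LinearMap.comp_apply, LinearMap.sum_apply, LinearMap.proj_apply, map_sum]
    refine Finset.sum_congr rfl fun i _ => ?_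
    have := LinearMap.congr_fun ((f i).2 h) (v i)
    exact this⟩

/-- `f : X → M` is a right interval approximation: every morphism from an interval module
to `M` factors through `f`. -/
def IsRightIntervalApprox {k P : Type} [Field k] [PartialOrder P]
    {X M : PersMod k P} (f : PersHom X M) : Prop :=
  ∀ (J : Set P) (hJ : IsIntervalSet J) (g : PersHom (intervalMod J hJ.1) M),
    ∃ h : PersHom (intervalMod J hJ.1) X, f.comp h = g

/-! The morphisms `V_J → M` that factor through the combined morphism form a subspace. It contains
every composite `b I j ∘ r`, hence, as the `b I j` span `W_I`, every `m ∘ r` with `m : V_I → M` a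
monomorphism. A morphism `g : V_J → M` is supported on a down-closed, hence convex, part `K` of `J`.
On each connected component `I` of `K`, `g` restricts to a morphism `m_I : V_I → M`, injective
because the fibres of `V_I` are lines on which `g` is nonzero, and `g = ∑_I m_I ∘ π_I` with
`π_I : V_J → V_I` the projection. -/

namespace PersHom

variable {M N O : PersMod k P}

@[ext]
theorem ext {f g : PersHom M N} (h : ∀ a, f.1 a = g.1 a) : f = g :=
  Subtype.ext (funext h)

theorem comp_assoc {Q : PersMod k P} (h : PersHom O Q) (g : PersHom N O) (f : PersHom M N) :
    (h.comp g).comp f = h.comp (g.comp f) := rfl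

theorem sum_apply {ι : Type} (s : Finset ι) (f : ι → PersHom M N) (a : P) (v : M.V a) :
    (∑ i ∈ s, f i).1 a v = ∑ i ∈ s, (f i).1 a v := by
  rw [show (∑ i ∈ s, f i).1 = ∑ i ∈ s, (f i).1 from Submodule.coe_sum _ _ _,
    Finset.sum_apply, LinearMap.sum_apply]

theorem map_apply (f : PersHom M N) {a b : P} (h : a ≤ b) (v : M.V a) :
    N.map h (f.1 a v) = f.1 b (M.map h v) :=
  LinearMap.congr_fun (f.2 h) v

def postcompₗ (f : PersHom N O) : PersHom M N →ₗ[k] PersHom M O where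
  toFun g := f.comp g
  map_add' _ _ := ext fun _ => LinearMap.comp_add _ _ _
  map_smul' _ _ := ext fun _ => LinearMap.comp_smul _ _ _

def precompₗ (f : PersHom M N) : PersHom N O →ₗ[k] PersHom M O where
  toFun g := g.comp f
  map_add' _ _ := ext fun _ => LinearMap.add_comp _ _ _
  map_smul' _ _ := ext fun _ => LinearMap.smul_comp _ _ _

theorem apply_eq_zero_of_le {f : PersHom M N} {a b : P} (hab : a ≤ b)
    (hsurj : Function.Surjective (M.map hab)) (ha : f.1 a = 0) : f.1 b = 0 := by
  ext w
  obtain ⟨v, rfl⟩ := hsurj w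
  rw [← map_apply, ha, LinearMap.zero_apply, map_zero, LinearMap.zero_apply]

def support (f : PersHom M N) : Set P := {a | f.1 a ≠ 0}

end PersHom

theorem Submodule.injective_of_ne_zero {N : Type} [AddCommGroup N] [Module k N]
    {S : Submodule k k} {f : S →ₗ[k] N} (hf : f ≠ 0) : Function.Injective f := by
  rcases eq_bot_or_eq_top S with rfl | rfl
  · exact Function.injective_of_subsingleton f
  · have : IsSimpleModule k (⊤ : Submodule k k) := IsSimpleModule.congr Submodule.topEquiv
    exact LinearMap.injective_of_ne_zero hf

noncomputable def dSum.single {ι : Type} [DecidableEq ι] (Mf : ι → PersMod k P) (i : ι) :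
    PersHom (Mf i) (dSum Mf) :=
  ⟨fun a => LinearMap.single k (fun j => (Mf j).V a) i, by
    intro a b h
    ext v
    funext j
    exact Pi.apply_single (fun j => (Mf j).map h) (fun j => map_zero _) i v j⟩

theorem combineHom_comp_single {ι : Type} [Fintype ι] [DecidableEq ι] {Mf : ι → PersMod k P}
    {N : PersMod k P} (f : ∀ i, PersHom (Mf i) N) (i : ι) :
    (combineHom f).comp (dSum.single Mf i) = f i := by
  ext a v
  change (∑ j, ((f j).1 a).comp (LinearMap.proj j)) (LinearMap.single k _ i v) = _
  rw [LinearMap.sum_apply, Fintype.sum_eq_single i fun j hj => ?_]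
  · simp
  · simp [Pi.single_eq_of_ne hj]

theorem comp_mem_range_postcompₗ_combineHom {ι : Type} [Fintype ι] {Mf : ι → PersMod k P}
    {N X : PersMod k P} (f : ∀ i, PersHom (Mf i) N) (i : ι) (h : PersHom X (Mf i)) :
    (f i).comp h ∈ LinearMap.range (PersHom.postcompₗ (M := X) (combineHom f)) := by
  classical
  exact ⟨(dSum.single Mf i).comp h, by
    rw [PersHom.postcompₗ, LinearMap.coe_mk, AddHom.coe_mk, ← PersHom.comp_assoc,
      combineHom_comp_single]⟩

theorem PersHom.comp_mem_of_mem_span {X Y M : PersMod k P} {F : Submodule k (PersHom X M)}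
    {ι : Type} {b : ι → PersHom Y M} {m : PersHom Y M} (hm : m ∈ Submodule.span k (Set.range b))
    (r : PersHom X Y) (hb : ∀ i, (b i).comp r ∈ F) : m.comp r ∈ F := by
  have hle : (Submodule.span k (Set.range b)).map (PersHom.precompₗ r) ≤ F := by
    rw [Submodule.map_span_le]
    rintro _ ⟨i, rfl⟩
    exact hb i
  exact hle (Submodule.mem_map_of_mem hm)

noncomputable def intervalFiberMap (S T : Set P) (a : P) :
    ↥(if a ∈ S then (⊤ : Submodule k k) else ⊥) →ₗ[k]
      ↥(if a ∈ T then (⊤ : Submodule k k) else ⊥) where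
  toFun v := ⟨if a ∈ S ∧ a ∈ T then (v : k) else 0, by
    by_cases ha : a ∈ T
    · simp [ha]
    · rw [if_neg ha, if_neg fun h => ha h.2]
      exact Submodule.zero_mem _⟩
  map_add' v w := by
    apply Subtype.ext
    by_cases h : a ∈ S ∧ a ∈ T <;> simp [h]
  map_smul' c v := by
    apply Subtype.ext
    by_cases h : a ∈ S ∧ a ∈ T <;> simp [h]

@[simp] theorem intervalFiberMap_coe (S T : Set P) (a : P)
    (v : ↥(if a ∈ S then (⊤ : Submodule k k) else ⊥)) :
    ((intervalFiberMap S T a v : ↥(if a ∈ T then (⊤ : Submodule k k) else ⊥)) : k)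
      = if a ∈ S ∧ a ∈ T then (v : k) else 0 := rfl

theorem intervalFiber_eq_zero {S : Set P} {a : P} (ha : a ∉ S)
    (v : ↥(if a ∈ S then (⊤ : Submodule k k) else ⊥)) : v = 0 :=
  Subtype.ext (intervalMem_zero ha v)

theorem intervalFiberMap_injective {S T : Set P} {a : P} (ha : a ∈ T) :
    Function.Injective (intervalFiberMap (k := k) S T a) := by
  intro v w hvw
  by_cases haS : a ∈ S
  · have hvw' := congrArg Subtype.val hvw
    simp only [intervalFiberMap_coe, haS, ha, and_self, if_true] at hvw'
    exact Subtype.ext hvw'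
  · rw [intervalFiber_eq_zero haS v, intervalFiber_eq_zero haS w]

theorem intervalMap_surjective (I : Set P) {a b : P} (ha : a ∈ I) :
    Function.Surjective (intervalMap (k := k) I a b) := by
  intro w
  by_cases hb : b ∈ I
  · exact ⟨⟨w, by simp [ha]⟩, Subtype.ext (by simp [ha, hb])⟩
  · exact ⟨0, by rw [intervalFiber_eq_zero hb w, map_zero]⟩

noncomputable def intervalProjection {I J : Set P} (hI : IsConvexSet I) (hJ : IsConvexSet J)
    (hIJ : I ⊆ J) (hdown : ∀ ⦃x y : P⦄, x ≤ y → x ∈ J → y ∈ I → x ∈ I) :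
    PersHom (intervalMod (k := k) J hJ) (intervalMod I hI) :=
  ⟨fun a => intervalFiberMap J I a, by
    intro x y hxy
    refine LinearMap.ext fun v => Subtype.ext ?_
    change ↥(if x ∈ J then (⊤ : Submodule k k) else ⊥) at v
    change ((intervalMap I x y (intervalFiberMap J I x v) : _) : k) =
      (intervalFiberMap J I y (intervalMap J x y v) : k)
    simp only [intervalMap_coe, intervalFiberMap_coe]
    by_cases hxJ : x ∈ J
    · by_cases hy : y ∈ I
      · simp [hdown hxy hxJ hy, hIJ hy, hy, hxJ]
      · simp [hy]
    · simp [intervalMem_zero hxJ v]⟩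

namespace PersHom

variable {M : PersMod k P} {J : Set P} {hJ : IsConvexSet J}

noncomputable def restrictInterval (g : PersHom (intervalMod J hJ) M) {I : Set P}
    (hI : IsConvexSet I) (hIJ : I ⊆ J)
    (hvanish : ∀ ⦃x y : P⦄, x ∈ I → x ≤ y → y ∉ I → g.1 y = 0) :
    PersHom (intervalMod I hI) M :=
  ⟨fun a => (g.1 a).comp (intervalFiberMap I J a), by
    intro x y hxy
    refine LinearMap.ext fun v => ?_
    change ↥(if x ∈ I then (⊤ : Submodule k k) else ⊥) at v
    change M.map hxy (g.1 x (intervalFiberMap I J x v)) =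
      g.1 y (intervalFiberMap I J y (intervalMap I x y v))
    refine (map_apply g hxy _).trans ?_
    by_cases hxI : x ∈ I
    · by_cases hyI : y ∈ I
      · congr 1
        refine Subtype.ext ?_
        change ((intervalMap J x y (intervalFiberMap I J x v) : _) : k) =
          (intervalFiberMap I J y (intervalMap I x y v) : k)
        simp [hxI, hyI, hIJ hxI, hIJ hyI]
      · rw [hvanish hxI hxy hyI]
        rfl
    · obtain rfl := intervalFiber_eq_zero hxI v
      simp only [map_zero]
      exact congrArg _ (map_zero ((intervalMod J hJ).map hxy))⟩

theorem restrictInterval_isMono (g : PersHom (intervalMod J hJ) M) {I : Set P}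
    (hI : IsConvexSet I) (hIJ : I ⊆ J)
    (hvanish : ∀ ⦃x y : P⦄, x ∈ I → x ≤ y → y ∉ I → g.1 y = 0) (hsupp : I ⊆ g.support) :
    IsMonoP (g.restrictInterval hI hIJ hvanish) := by
  intro a
  by_cases ha : a ∈ I
  · exact (Submodule.injective_of_ne_zero (hsupp ha)).comp (intervalFiberMap_injective (hIJ ha))
  · intro v w _
    rw [intervalFiber_eq_zero ha v, intervalFiber_eq_zero ha w]

end PersHom

def ComparableIn (K : Set P) (x y : P) : Prop := x ∈ K ∧ y ∈ K ∧ (x ≤ y ∨ y ≤ x)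

instance (K : Set P) : Std.Symm (ComparableIn K) := ⟨fun _ _ h => ⟨h.2.1, h.1, h.2.2.symm⟩⟩

def zigzagComponent (K : Set P) (a : P) : Set P :=
  {b | b ∈ K ∧ Relation.ReflTransGen (ComparableIn K) a b}

def IsZigzagComponent (K I : Set P) : Prop := ∃ a ∈ K, zigzagComponent K a = I

section Component

variable {K : Set P} {a : P}

theorem mem_zigzagComponent_self (ha : a ∈ K) : a ∈ zigzagComponent K a :=
  ⟨ha, Relation.ReflTransGen.refl⟩

theorem zigzagComponent_subset : zigzagComponent K a ⊆ K := fun _ h => h.1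

theorem zigzagComponent_eq_of_mem {b : P} (hb : b ∈ zigzagComponent K a) :
    zigzagComponent K b = zigzagComponent K a :=
  Set.ext fun _ => ⟨fun hc => ⟨hc.1, hb.2.trans hc.2⟩, fun hc => ⟨hc.1, (symm hb.2).trans hc.2⟩⟩

theorem mem_zigzagComponent_of_comparable {x y : P} (hx : x ∈ zigzagComponent K a) (hy : y ∈ K)
    (hxy : x ≤ y ∨ y ≤ x) : y ∈ zigzagComponent K a :=
  ⟨hy, hx.2.tail ⟨hx.1, hy, hxy⟩⟩

theorem reflTransGen_comparableIn_zigzagComponent {b c : P} (hb : b ∈ zigzagComponent K a)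
    (h : Relation.ReflTransGen (ComparableIn K) b c) :
    Relation.ReflTransGen (ComparableIn (zigzagComponent K a)) b c := by
  induction h with
  | refl => exact Relation.ReflTransGen.refl
  | @tail x y hbx hxy ih =>
    have hx : x ∈ zigzagComponent K a := ⟨hxy.1, hb.2.trans hbx⟩
    exact ih.tail ⟨hx, mem_zigzagComponent_of_comparable hx hxy.2.1 hxy.2.2, hxy.2.2⟩

theorem isIntervalSet_zigzagComponent (hK : IsConvexSet K) (ha : a ∈ K) :
    IsIntervalSet (zigzagComponent K a) := by
  refine ⟨fun x y z hx hz hxy hyz => ?_, ⟨a, mem_zigzagComponent_self ha⟩, fun b hb c hc => ?_⟩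
  · exact mem_zigzagComponent_of_comparable hz (hK hx.1 hz.1 hxy hyz) (Or.inr hyz)
  · exact reflTransGen_comparableIn_zigzagComponent hb ((symm hb.2).trans hc.2)

theorem IsZigzagComponent.eq_zigzagComponent_of_mem {I : Set P} (hI : IsZigzagComponent K I)
    {x : P} (hx : x ∈ I) : I = zigzagComponent K x := by
  obtain ⟨a, -, rfl⟩ := hI
  exact (zigzagComponent_eq_of_mem hx).symm

end Component

namespace PersHom

variable {M : PersMod k P} {J : Set P} {hJ : IsConvexSet J} (g : PersHom (intervalMod J hJ) M)

theorem support_subset : g.support ⊆ J := fun a hga => by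
  by_contra ha
  exact hga (LinearMap.ext fun v => by
    obtain rfl := intervalFiber_eq_zero ha v
    exact map_zero _)

theorem mem_support_of_le {x y : P} (hxy : x ≤ y) (hx : x ∈ J) (hy : y ∈ g.support) :
    x ∈ g.support :=
  fun hgx => hy (apply_eq_zero_of_le hxy (intervalMap_surjective J hx) hgx)

theorem isConvexSet_support : IsConvexSet g.support := fun _ _ _ hx hz hxy hyz =>
  g.mem_support_of_le hyz (hJ (g.support_subset hx) (g.support_subset hz) hxy hyz) hz

section Component

variable {g} {I : Set P}

theorem isIntervalSet_of_isZigzagComponent (hI : IsZigzagComponent g.support I) :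
    IsIntervalSet I := by
  obtain ⟨a, ha, rfl⟩ := hI
  exact isIntervalSet_zigzagComponent g.isConvexSet_support ha

theorem subset_support_of_isZigzagComponent (hI : IsZigzagComponent g.support I) :
    I ⊆ g.support := by
  obtain ⟨a, -, rfl⟩ := hI
  exact zigzagComponent_subset

theorem mem_of_le_of_isZigzagComponent (hI : IsZigzagComponent g.support I) {x y : P} (hxy : x ≤ y)
    (hx : x ∈ J) (hy : y ∈ I) : x ∈ I := by
  obtain ⟨a, -, rfl⟩ := hI
  exact mem_zigzagComponent_of_comparable hy (g.mem_support_of_le hxy hx hy.1) (Or.inr hxy)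

theorem apply_eq_zero_of_isZigzagComponent (hI : IsZigzagComponent g.support I) {x y : P}
    (hx : x ∈ I) (hxy : x ≤ y) (hy : y ∉ I) : g.1 y = 0 := by
  obtain ⟨a, -, rfl⟩ := hI
  by_contra hgy
  exact hy (mem_zigzagComponent_of_comparable hx hgy (Or.inl hxy))

end Component

variable (I : {I : Set P // IsZigzagComponent g.support I})

noncomputable def componentMono :
    PersHom (intervalMod I.1 (isIntervalSet_of_isZigzagComponent I.2).1) M :=
  g.restrictInterval _ ((subset_support_of_isZigzagComponent I.2).trans g.support_subset)
    fun _ _ => apply_eq_zero_of_isZigzagComponent I.2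

noncomputable def componentProjection :
    PersHom (intervalMod J hJ)
      (intervalMod (k := k) I.1 (isIntervalSet_of_isZigzagComponent I.2).1) :=
  intervalProjection _ hJ ((subset_support_of_isZigzagComponent I.2).trans g.support_subset)
    fun _ _ => mem_of_le_of_isZigzagComponent I.2

theorem componentMono_isMono : IsMonoP (g.componentMono I) :=
  restrictInterval_isMono g _ _ _ (subset_support_of_isZigzagComponent I.2)

theorem componentMono_comp_componentProjection_apply_of_mem {x : P} (hx : x ∈ I.1)
    (v : (intervalMod J hJ).V x) :
    ((g.componentMono I).comp (g.componentProjection I)).1 x v = g.1 x v := by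
  change ↥(if x ∈ J then (⊤ : Submodule k k) else ⊥) at v
  change g.1 x (intervalFiberMap I.1 J x (intervalFiberMap J I.1 x v)) = g.1 x v
  have hxJ : x ∈ J := g.support_subset (subset_support_of_isZigzagComponent I.2 hx)
  congr 1
  exact Subtype.ext (by simp [hx, hxJ])

theorem componentMono_comp_componentProjection_apply_of_notMem {x : P} (hx : x ∉ I.1)
    (v : (intervalMod J hJ).V x) :
    ((g.componentMono I).comp (g.componentProjection I)).1 x v = 0 := by
  change g.1 x (intervalFiberMap I.1 J x (intervalFiberMap J I.1 x v)) = 0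
  rw [intervalFiber_eq_zero hx (intervalFiberMap J I.1 x v), map_zero]
  exact map_zero _

theorem sum_componentMono_comp_componentProjection [Fintype P] :
    ∑ I, (g.componentMono I).comp (g.componentProjection I) = g := by
  ext x v
  rw [sum_apply]
  by_cases hx : x ∈ g.support
  · let I₀ : {I : Set P // IsZigzagComponent g.support I} :=
      ⟨zigzagComponent g.support x, x, hx, rfl⟩
    rw [Fintype.sum_eq_single I₀ fun I hI => ?_]
    · exact componentMono_comp_componentProjection_apply_of_mem g I₀
        (mem_zigzagComponent_self hx) v
    · exact componentMono_comp_componentProjection_apply_of_notMem g I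
        (fun hxI => hI (Subtype.ext (I.2.eq_zigzagComponent_of_mem hxI))) v
  · have hgx : g.1 x = 0 := not_not.1 hx
    rw [hgx, LinearMap.zero_apply]
    exact Finset.sum_eq_zero fun I _ => componentMono_comp_componentProjection_apply_of_notMem g I
      (fun hxI => hx (subset_support_of_isZigzagComponent I.2 hxI)) v

end PersHom

theorem combined_span_of_monos_is_rightIntervalApprox_general
    {k P : Type} [Field k] [PartialOrder P] [Fintype P]
    (M : PersMod k P)
    (n : Set P → ℕ)
    (b : ∀ (I : Set P) (hI : IsIntervalSet I), Fin (n I) → PersHom (intervalMod I hI.1) M)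
    (hspan : ∀ (I : Set P) (hI : IsIntervalSet I),
      (∃ m : PersHom (intervalMod I hI.1) M, IsMonoP m) →
        Submodule.span k (Set.range (b I hI)) =
          Submodule.span k {g : PersHom (intervalMod I hI.1) M | IsMonoP g}) :
    IsRightIntervalApprox
      (combineHom
        (ι := Σ I : {S : Set P // ∃ hS : IsIntervalSet S,
            ∃ m : PersHom (intervalMod S hS.1) M, IsMonoP m}, Fin (n I.1))
        (fun p => b p.1.1 p.1.2.choose p.2)) := by
  intro J hJ g
  rw [← g.sum_componentMono_comp_componentProjection]
  refine LinearMap.mem_range.1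
    (Submodule.sum_mem (LinearMap.range (PersHom.postcompₗ _)) fun I _ => ?_)
  have hI := PersHom.isIntervalSet_of_isZigzagComponent I.2
  have hmono := g.componentMono_isMono I
  have hmem : g.componentMono I ∈ Submodule.span k (Set.range (b I.1 hI)) :=
    hspan I.1 hI ⟨_, hmono⟩ ▸ Submodule.subset_span hmono
  refine PersHom.comp_mem_of_mem_span hmem _ fun j => ?_
  exact comp_mem_range_postcompₗ_combineHom _ (⟨⟨I.1, hI, _, hmono⟩, j⟩ : Σ I : {S : Set P //
    ∃ hS : IsIntervalSet S, ∃ m : PersHom (intervalMod S hS.1) M, IsMonoP m}, Fin (n I.1)) _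

/-- For each interval `I` admitting a monomorphism `V_I → M`, choose
monomorphisms `b I hI 0, …, b I hI (n I - 1) : V_I → M` forming a basis of the span `W_I`
of all monomorphisms `V_I → M`.  Then the combined morphism
`⊕_{I ∈ S_int(M)} V_I^{n I} → M` is a right interval approximation of `M`. -/
theorem combined_span_of_monos_is_rightIntervalApprox
    {k P : Type} [Field k] [PartialOrder P] [Fintype P]
    (M : PersMod k P) (hMfin : ∀ a, FiniteDimensional k (M.V a))
    (n : Set P → ℕ)
    (b : ∀ (I : Set P) (hI : IsIntervalSet I), Fin (n I) → PersHom (intervalMod I hI.1) M)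
    (hmono : ∀ (I : Set P) (hI : IsIntervalSet I),
      (∃ m : PersHom (intervalMod I hI.1) M, IsMonoP m) → ∀ j, IsMonoP (b I hI j))
    (hindep : ∀ (I : Set P) (hI : IsIntervalSet I),
      (∃ m : PersHom (intervalMod I hI.1) M, IsMonoP m) → LinearIndependent k (b I hI))
    (hspan : ∀ (I : Set P) (hI : IsIntervalSet I),
      (∃ m : PersHom (intervalMod I hI.1) M, IsMonoP m) →
        Submodule.span k (Set.range (b I hI)) =
          Submodule.span k {g : PersHom (intervalMod I hI.1) M | IsMonoP g}) :
    IsRightIntervalApprox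
      (combineHom
        (ι := Σ I : {S : Set P // ∃ hS : IsIntervalSet S,
            ∃ m : PersHom (intervalMod S hS.1) M, IsMonoP m}, Fin (n I.1))
        (fun p => b p.1.1 p.1.2.choose p.2)) :=
  combined_span_of_monos_is_rightIntervalApprox_general M n b hspan
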